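/- Let c : ℝ → ℝ² be a smooth 2π-periodic curve parametrized with constant speed, i.e. ‖c'(θ)‖ = ℓ for all θ for some ℓ > 0, with unit tangent v = c'/‖c'‖, unit normal n = J v, arc-length derivative D_s f = f'/ℓ, and curvature κ = ⟨D_s v, n⟩. Let h : ℝ → ℝ² be smooth and 2π-periodic. Then the first variation of speed θ ↦ (d/dt)|_{t=0} ‖c'(θ) + t h'(θ)‖ is a constant function of θ (i.e. the deformation h infinitesimally preserves the constant-speed parametrization) if and only if ⟨D_s² h(θ), v(θ)⟩ + κ(θ) ⟨D_s h(θ), n(θ)⟩ = 0 for all θ. -/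

import Mathlib

open Real Function
open scoped RealInnerProductSpace

/-- Rotation by `π/2` in the plane. -/
noncomputable def Jrot (x : EuclideanSpace ℝ (Fin 2)) : EuclideanSpace ℝ (Fin 2) :=
  (WithLp.equiv 2 (Fin 2 → ℝ)).symm ![-(x 1), x 0]

/-- The unit tangent vector field `v = c'/‖c'‖` of a curve `c`. -/
noncomputable def unitTangent (c : ℝ → EuclideanSpace ℝ (Fin 2)) (θ : ℝ) :
    EuclideanSpace ℝ (Fin 2) :=
  ‖deriv c θ‖⁻¹ • deriv c θ

/-- The unit normal vector field `n = J v` of a curve `c`. -/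
noncomputable def unitNormal (c : ℝ → EuclideanSpace ℝ (Fin 2)) (θ : ℝ) :
    EuclideanSpace ℝ (Fin 2) :=
  Jrot (unitTangent c θ)

/-- The arc-length derivative `D_s f = f'/‖c'‖` along the curve `c`. -/
noncomputable def arcDeriv (c : ℝ → EuclideanSpace ℝ (Fin 2)) {F : Type*}
    [NormedAddCommGroup F] [NormedSpace ℝ F] (f : ℝ → F) (θ : ℝ) : F :=
  ‖deriv c θ‖⁻¹ • deriv f θ

/-- The curvature `κ = ⟨D_s v, n⟩` of a curve `c`. -/
noncomputable def curvature (c : ℝ → EuclideanSpace ℝ (Fin 2)) (θ : ℝ) : ℝ :=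
  inner ℝ (arcDeriv c (unitTangent c) θ) (unitNormal c θ)

section AuxLemmas

lemma Jrot_apply0 (x : EuclideanSpace ℝ (Fin 2)) : Jrot x 0 = -(x 1) := rfl
lemma Jrot_apply1 (x : EuclideanSpace ℝ (Fin 2)) : Jrot x 1 = x 0 := rfl

lemma Jrot_smul (a : ℝ) (x : EuclideanSpace ℝ (Fin 2)) : Jrot (a • x) = a • Jrot x := by
  ext i
  fin_cases i <;> simp [Jrot_apply0, Jrot_apply1, mul_comm]

lemma inner_jrot_identity (A B P : EuclideanSpace ℝ (Fin 2)) :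
    ⟪B, Jrot A⟫ * ⟪P, Jrot A⟫ + ⟪B, A⟫ * ⟪P, A⟫ = ⟪A, A⟫ * ⟪B, P⟫ := by
  simp [PiLp.inner_apply, Jrot_apply0, Jrot_apply1, Fin.sum_univ_two]
  rw [EuclideanSpace.norm_eq, Real.sq_sqrt (by positivity), Fin.sum_univ_two]
  simp only [Real.norm_eq_abs, sq_abs]
  ring

variable {E : Type*} [NormedAddCommGroup E] [InnerProductSpace ℝ E]

lemma deriv_norm_line (A B : E) (hA : A ≠ 0) :
    deriv (fun t : ℝ => ‖A + t • B‖) 0 = ⟪A, B⟫ / ‖A‖ := by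
  have hline : HasDerivAt (fun t : ℝ => A + t • B) B 0 := by
    simpa using ((hasDerivAt_id (0:ℝ)).smul_const B).const_add A
  have hsq : HasDerivAt (fun t : ℝ => ‖A + t • B‖ ^ 2) (2 * ⟪A, B⟫) 0 := by
    simpa using hline.norm_sq
  have hne : ‖A + (0:ℝ) • B‖ ^ 2 ≠ 0 := by simpa using hA
  have hs : HasDerivAt (fun t : ℝ => Real.sqrt (‖A + t • B‖ ^ 2))
      ((2 * ⟪A, B⟫) / (2 * Real.sqrt (‖A + (0:ℝ) • B‖ ^ 2))) 0 := hsq.sqrt (by simpa using hA)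
  have heq : (fun t : ℝ => Real.sqrt (‖A + t • B‖ ^ 2)) = fun t : ℝ => ‖A + t • B‖ := by
    funext t; exact Real.sqrt_sq (norm_nonneg _)
  rw [heq] at hs
  rw [hs.deriv]
  rw [show A + (0:ℝ) • B = A by simp, Real.sqrt_sq (norm_nonneg A)]
  ring
end AuxLemmas

/-- Constant-speed-preservation criterion (Lemma 3.1): for a smooth `2π`-periodic
curve `c` of constant speed `ℓ > 0` and a smooth `2π`-periodic deformation `h`,
the first variation of speed `θ ↦ (d/dt)|₀ ‖c'(θ) + t h'(θ)‖` is constant in `θ`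
iff `⟨D_s² h, v⟩ + κ ⟨D_s h, n⟩ = 0` everywhere. -/
theorem constant_speed_preservation (c : ℝ → EuclideanSpace ℝ (Fin 2))
    (hc : ContDiff ℝ (⊤ : ℕ∞) c) (hcper : Function.Periodic c (2 * π))
    (ℓ : ℝ) (hℓ : 0 < ℓ) (hspeed : ∀ θ : ℝ, ‖deriv c θ‖ = ℓ)
    (h : ℝ → EuclideanSpace ℝ (Fin 2))
    (hh : ContDiff ℝ (⊤ : ℕ∞) h) (hhper : Function.Periodic h (2 * π)) :
    (∃ r : ℝ, ∀ θ : ℝ,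
        deriv (fun t : ℝ => ‖deriv c θ + t • deriv h θ‖) 0 = r) ↔
      ∀ θ : ℝ,
        (inner ℝ (arcDeriv c (arcDeriv c h) θ) (unitTangent c θ) : ℝ) +
          curvature c θ * (inner ℝ (arcDeriv c h θ) (unitNormal c θ) : ℝ) = 0 := by
  have hc' : ContDiff ℝ (⊤:ℕ∞) (deriv c) := (contDiff_infty_iff_deriv.mp (hc.of_le (by simp))).2
  have hh' : ContDiff ℝ (⊤:ℕ∞) (deriv h) := (contDiff_infty_iff_deriv.mp (hh.of_le (by simp))).2
  have hcd : Differentiable ℝ (deriv c) := hc'.differentiable (by simp)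
  have hhd : Differentiable ℝ (deriv h) := hh'.differentiable (by simp)
  set g : ℝ → ℝ := fun θ => ⟪deriv c θ, deriv h θ⟫ with hg
  have hgdiff : Differentiable ℝ g := hcd.inner ℝ hhd
  have hgderiv : ∀ θ, deriv g θ =
      ⟪deriv c θ, deriv (deriv h) θ⟫ + ⟪deriv (deriv c) θ, deriv h θ⟫ := fun θ =>
    (((hcd θ).hasDerivAt).inner ℝ ((hhd θ).hasDerivAt)).deriv
  have hA0 : ∀ θ, deriv c θ ≠ 0 := fun θ => by
    intro hzero
    have := hspeed θ; rw [hzero, norm_zero] at this; exact hℓ.ne this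
  have hLHS : ∀ θ, deriv (fun t : ℝ => ‖deriv c θ + t • deriv h θ‖) 0 = g θ / ℓ := fun θ => by
    rw [deriv_norm_line _ _ (hA0 θ), hspeed]
  -- orthogonality of c'' and c'
  have horth : ∀ θ, ⟪deriv (deriv c) θ, deriv c θ⟫ = 0 := by
    intro θ
    have h1 : HasDerivAt (fun θ => ⟪deriv c θ, deriv c θ⟫)
        (⟪deriv c θ, deriv (deriv c) θ⟫ + ⟪deriv (deriv c) θ, deriv c θ⟫) θ :=
      ((hcd θ).hasDerivAt).inner ℝ ((hcd θ).hasDerivAt)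
    have h2 : (fun θ => (⟪deriv c θ, deriv c θ⟫ : ℝ)) = fun _ => ℓ ^ 2 := funext fun θ => by
      rw [real_inner_self_eq_norm_sq, hspeed]
    rw [h2] at h1
    have h3 := h1.unique (hasDerivAt_const θ (ℓ ^ 2))
    have h4 : ⟪deriv c θ, deriv (deriv c) θ⟫ = ⟪deriv (deriv c) θ, deriv c θ⟫ :=
      real_inner_comm _ _
    linarith [h3, h4]
  -- unfolding definitions
  have hArc : ∀ (f : ℝ → EuclideanSpace ℝ (Fin 2)), arcDeriv c f = fun θ => ℓ⁻¹ • deriv f θ := by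
    intro f; funext θ; simp only [arcDeriv, hspeed]
  have hUT : unitTangent c = fun θ => ℓ⁻¹ • deriv c θ := by
    funext θ; simp only [unitTangent, hspeed]
  have hUN : ∀ θ, unitNormal c θ = ℓ⁻¹ • Jrot (deriv c θ) := fun θ => by
    rw [unitNormal, hUT, Jrot_smul]
  have hArc2 : ∀ θ, arcDeriv c (arcDeriv c h) θ = ℓ⁻¹ • (ℓ⁻¹ • deriv (deriv h) θ) := fun θ => by
    simp only [hArc]
    rw [deriv_fun_const_smul _ (hhd θ)]
  have hcurv : ∀ θ, curvature c θ = ℓ⁻¹ * (ℓ⁻¹ * (ℓ⁻¹ * ⟪deriv (deriv c) θ, Jrot (deriv c θ)⟫)) := by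
    intro θ
    rw [curvature]
    simp only [hArc, hUT, hUN θ]
    rw [deriv_fun_const_smul _ (hcd θ)]
    rw [real_inner_smul_left, real_inner_smul_left, real_inner_smul_right]
  -- key identity: E θ = ℓ⁻³ * deriv g θ
  have hE : ∀ θ, (inner ℝ (arcDeriv c (arcDeriv c h) θ) (unitTangent c θ) : ℝ) +
      curvature c θ * (inner ℝ (arcDeriv c h θ) (unitNormal c θ) : ℝ)
      = (ℓ ^ 3)⁻¹ * deriv g θ := by
    intro θ
    set A := deriv c θ; set B := deriv (deriv c) θ
    set P := deriv h θ; set Q := deriv (deriv h) θ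
    have hkey : ⟪B, Jrot A⟫ * ⟪P, Jrot A⟫ = ℓ ^ 2 * ⟪B, P⟫ := by
      have := inner_jrot_identity A B P
      rw [horth θ] at this
      rw [real_inner_self_eq_norm_sq, hspeed] at this
      simpa using this
    rw [hArc2, hcurv, hgderiv]
    simp only [hArc, hUT, hUN θ, real_inner_smul_left, real_inner_smul_right]
    have hQA : ⟪A, Q⟫ = ⟪Q, A⟫ := real_inner_comm _ _
    rw [hQA]
    have hl : ℓ ≠ 0 := hℓ.ne'
    set a := (⟪Q, A⟫ : ℝ)
    set b := (⟪B, P⟫ : ℝ)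
    set u := (⟪B, Jrot A⟫ : ℝ)
    set w := (⟪P, Jrot A⟫ : ℝ)
    calc ℓ⁻¹ * (ℓ⁻¹ * (ℓ⁻¹ * a)) + ℓ⁻¹ * (ℓ⁻¹ * (ℓ⁻¹ * u)) * (ℓ⁻¹ * (ℓ⁻¹ * w))
        = (ℓ ^ 3)⁻¹ * a + (ℓ ^ 5)⁻¹ * (u * w) := by field_simp
      _ = (ℓ ^ 3)⁻¹ * a + (ℓ ^ 5)⁻¹ * (ℓ ^ 2 * b) := by rw [hkey]
      _ = (ℓ ^ 3)⁻¹ * (a + b) := by field_simp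
  constructor
  · rintro ⟨r, hr⟩ θ
    have hgconst : g = fun _ => ℓ * r := funext fun θ => by
      have := hr θ; rw [hLHS] at this
      field_simp at this ⊢
      linarith [this]
    rw [hE θ, hgconst]
    simp
  · intro hz
    refine ⟨g 0 / ℓ, fun θ => ?_⟩
    have hdg : ∀ θ, deriv g θ = 0 := by
      intro θ
      have := hz θ; rw [hE θ] at this
      have hl3 : (ℓ ^ 3)⁻¹ ≠ 0 := by positivity
      exact (mul_eq_zero.mp this).resolve_left hl3
    have := is_const_of_deriv_eq_zero hgdiff hdg θ 0
    rw [hLHS, this]
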